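/- arXiv:1303.0919 — 3 statements merged into one kernel-verified Lean document; each statement's English description precedes it below -/
import Mathlib

section
/- Let E=(E^0,E^1,r,s) be a countable directed graph. Then the following are equivalent: (1) E has no loops, i.e. there is no finite path x of positive length with s(x)=r(x); (2) for every nonempty finite subset A of E^0 and every finite path x of positive length, it is not the case that A ⊆ r(A,x); (3) there is no repeatable path, i.e. no finite path x of positive length such that the n-fold concatenation x^n is a path in E for every n ≥ 1; (4) for every finite collection A_1,…,A_m of finite subsets of E^0 and every K ≥ 1, there exists m_0 ≥ 1 such that A_{i_1}E^{≤K}A_{i_2}⋯E^{≤K}A_{i_{n+1}} = ∅ for all n > m_0 and all choices i_1,…,i_{n+1} ∈ {1,…,m}. -/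
/-! # Common framework for labeled graph C*-algebras

Directed graphs, finite paths, labeled spaces `(E, L, 𝔅̄)` where `𝔅̄` is the
smallest accommodating set closed under relative complements (and containing
the sink parts of its members), loops and generalized loops, representations
of labeled spaces in C*-algebras, gauge actions, infinite projections,
AF algebras, and closed two-sided ideals. -/

noncomputable section

/-- A directed graph with vertex set `V` and edge set `E`. -/
structure DirGraph (V : Type*) (E : Type*) where
  src : E → V
  rng : E → V

variable {V E 𝒜 : Type*}

/-- A (finite) path of positive length in a directed graph: a nonempty list of
composable edges. -/
structure GPath (G : DirGraph V E) where
  edges : List E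
  ne : edges ≠ []
  chain : edges.Chain' fun e f => G.rng e = G.src f

namespace GPath

variable {G : DirGraph V E}

/-- The source vertex of a path. -/
def source (p : GPath G) : V := G.src (p.edges.head p.ne)

/-- The range vertex of a path. -/
def range (p : GPath G) : V := G.rng (p.edges.getLast p.ne)

/-- The length of a path. -/
def length (p : GPath G) : ℕ := p.edges.length

/-- The label word of a path under a labeling `L`. -/
def label (L : E → 𝒜) (p : GPath G) : List 𝒜 := p.edges.map L

end GPath

/-- The set of sinks of a graph (vertices emitting no edge). -/
def DirGraph.sinks (G : DirGraph V E) : Set V := {v | ∀ e, G.src e ≠ v}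

/-- `w ∈ L*(E)`: `w` is the label of some path of positive length. -/
def IsLabelWord (G : DirGraph V E) (L : E → 𝒜) (w : List 𝒜) : Prop :=
  ∃ p : GPath G, p.label L = w

/-- The range `r(w)` of a labeled path `w`. -/
def rngW (G : DirGraph V E) (L : E → 𝒜) (w : List 𝒜) : Set V :=
  {v | ∃ p : GPath G, p.label L = w ∧ p.range = v}

/-- The relative range `r(A, w)` of a labeled path `w` with respect to `A`. -/
def relRng (G : DirGraph V E) (L : E → 𝒜) (A : Set V) (w : List 𝒜) : Set V :=
  {v | ∃ p : GPath G, p.label L = w ∧ p.source ∈ A ∧ p.range = v}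

/-- `L(A E^n)`: labels of paths of length exactly `n` with source in `A`. -/
def labelsFromLen (G : DirGraph V E) (L : E → 𝒜) (A : Set V) (n : ℕ) : Set (List 𝒜) :=
  {w | ∃ p : GPath G, p.source ∈ A ∧ p.length = n ∧ p.label L = w}

/-- `L(A E^{≤n})`: labels of paths of length between `1` and `n` with source in `A`. -/
def labelsFromLe (G : DirGraph V E) (L : E → 𝒜) (A : Set V) (n : ℕ) : Set (List 𝒜) :=
  {w | ∃ p : GPath G, p.source ∈ A ∧ p.length ≤ n ∧ p.label L = w}

/-- `L(A E^{≥n})`: labels of paths of length at least `n` (and at least `1`)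
with source in `A`. -/
def labelsFromGe (G : DirGraph V E) (L : E → 𝒜) (A : Set V) (n : ℕ) : Set (List 𝒜) :=
  {w | ∃ p : GPath G, p.source ∈ A ∧ n ≤ p.length ∧ p.label L = w}

/-- `L(E^n A)`: labels of paths of length exactly `n` with range in `A`. -/
def labelsToLen (G : DirGraph V E) (L : E → 𝒜) (n : ℕ) (A : Set V) : Set (List 𝒜) :=
  {w | ∃ p : GPath G, p.range ∈ A ∧ p.length = n ∧ p.label L = w}

/-- `L(E^{≤l} v)`: labels of paths of length between `1` and `l` with range `v`. -/
def labelsToLe (G : DirGraph V E) (L : E → 𝒜) (l : ℕ) (v : V) : Set (List 𝒜) :=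
  {w | ∃ p : GPath G, p.range = v ∧ p.length ≤ l ∧ p.label L = w}

/-- `𝔅̄`: the smallest accommodating set for `(E, L)` (containing the ranges
`r(α)` for `α ∈ L*(E)` and closed under relative ranges, finite intersections
and finite unions) that is moreover closed under relative complements and
contains `A_sk = A ∩ sinks` for every `A` belonging to it. -/
inductive Bbar (G : DirGraph V E) (L : E → 𝒜) : Set V → Prop
  | base (w : List 𝒜) (hw : IsLabelWord G L w) : Bbar G L (rngW G L w)
  | rel (A : Set V) (w : List 𝒜) (hA : Bbar G L A) (hw : IsLabelWord G L w) :
      Bbar G L (relRng G L A w)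
  | inter (A B : Set V) (hA : Bbar G L A) (hB : Bbar G L B) : Bbar G L (A ∩ B)
  | union (A B : Set V) (hA : Bbar G L A) (hB : Bbar G L B) : Bbar G L (A ∪ B)
  | diff (A B : Set V) (hA : Bbar G L A) (hB : Bbar G L B) : Bbar G L (A \ B)
  | sk (A : Set V) (hA : Bbar G L A) : Bbar G L (A ∩ G.sinks)

/-- The standing assumptions on a labeled space `(E, L, 𝔅̄)`: weakly
left-resolving, set-finite, receiver set-finite, and no sink is a source. -/
structure StandingAssumptions (G : DirGraph V E) (L : E → 𝒜) : Prop where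
  wlr : ∀ A B : Set V, Bbar G L A → Bbar G L B → ∀ w : List 𝒜, IsLabelWord G L w →
    relRng G L A w ∩ relRng G L B w = relRng G L (A ∩ B) w
  setFinite : ∀ A : Set V, Bbar G L A → ∀ n : ℕ, 1 ≤ n → (labelsFromLen G L A n).Finite
  receiverSetFinite : ∀ A : Set V, Bbar G L A → ∀ n : ℕ, 1 ≤ n → (labelsToLen G L n A).Finite
  sinkNotSource : ∀ v ∈ G.sinks, ∃ e, G.rng e = v

/-- The `n`-fold concatenation `w^n` of a word `w`. -/
def wordPow (w : List 𝒜) (n : ℕ) : List 𝒜 := (List.replicate n w).flatten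

/-- A labeled path is repeatable if all its powers `w^n`, `n ≥ 1`, are again
labeled paths. -/
def Repeatable (G : DirGraph V E) (L : E → 𝒜) (w : List 𝒜) : Prop :=
  ∀ n : ℕ, 1 ≤ n → IsLabelWord G L (wordPow w n)

/-- The generalized vertex `[v]_l`: all non-source vertices receiving exactly
the same labeled paths of length at most `l` as `v` does. -/
def gvtx (G : DirGraph V E) (L : E → 𝒜) (l : ℕ) (v : V) : Set V :=
  {u | (∃ e, G.rng e = u) ∧ labelsToLe G L l u = labelsToLe G L l v}

/-- A generalized loop at `A`: a labeled path `α ∈ L(A E^{≥1} A)`. -/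
def IsGenLoop (G : DirGraph V E) (L : E → 𝒜) (A : Set V) (α : List 𝒜) : Prop :=
  ∃ p : GPath G, p.label L = α ∧ p.source ∈ A ∧ p.range ∈ A

/-- A loop at `A`: a generalized loop `α` at `A` such that `A ⊆ r(A, α)`. -/
def IsLoop (G : DirGraph V E) (L : E → 𝒜) (A : Set V) (α : List 𝒜) : Prop :=
  IsGenLoop G L A α ∧ A ⊆ relRng G L A α

/-- The nonempty initial segments (initial paths) of a word `α`. -/
def initialSegs (α : List 𝒜) : Set (List 𝒜) := {w | w ≠ [] ∧ w <+: α}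

/-- A loop `α` at `A` has an exit if (i) the initial segments of `α` form a
proper subset of `L(A E^{≤|α|})`, or (ii) `r(A, α_{[1,i]})` contains a sink for
some `1 ≤ i ≤ |α|`, or (iii) `A` is a proper subset of `r(A, α)`. -/
def HasExitLoop (G : DirGraph V E) (L : E → 𝒜) (A : Set V) (α : List 𝒜) : Prop :=
  initialSegs α ⊂ labelsFromLe G L A α.length ∨
  (∃ k : ℕ, 1 ≤ k ∧ k ≤ α.length ∧ (relRng G L A (α.take k) ∩ G.sinks).Nonempty) ∨
  A ⊂ relRng G L A α

/-- `A_0 E^{≤K} A_1 ⋯ E^{≤K} A_m ≠ ∅`: existence of `m` consecutively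
composable paths, each of length between `1` and `K`, the `j`-th going from
`As j` to `As (j+1)`. -/
def ChainExists (G : DirGraph V E) (As : ℕ → Set V) (K m : ℕ) : Prop :=
  ∃ xs : Fin m → GPath G,
    (∀ j : Fin m, (xs j).length ≤ K ∧ (xs j).source ∈ As j.val ∧
      (xs j).range ∈ As (j.val + 1)) ∧
    ∀ (j : ℕ) (h : j + 1 < m),
      (xs ⟨j, Nat.lt_of_succ_lt h⟩).range = (xs ⟨j + 1, h⟩).source

/-- Same as `ChainExists` but with all paths of length exactly `K`
(i.e. `A_0 E^K A_1 ⋯ E^K A_m ≠ ∅`). -/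
def ChainExistsExact (G : DirGraph V E) (As : ℕ → Set V) (K m : ℕ) : Prop :=
  ∃ xs : Fin m → GPath G,
    (∀ j : Fin m, (xs j).length = K ∧ (xs j).source ∈ As j.val ∧
      (xs j).range ∈ As (j.val + 1)) ∧
    ∀ (j : ℕ) (h : j + 1 < m),
      (xs ⟨j, Nat.lt_of_succ_lt h⟩).range = (xs ⟨j + 1, h⟩).source

/-- Condition (a): for every finite family `A_1, …, A_N` in `𝔅̄` and every
`K ≥ 1` there is `m₀ ≥ 1` such that
`A_{i_1} E^{≤K} A_{i_2} ⋯ E^{≤K} A_{i_n} = ∅` (`n` sets, `n - 1` path factors)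
for all `n > m₀` and all choices of indices. -/
def CondA (G : DirGraph V E) (L : E → 𝒜) : Prop :=
  ∀ (N : ℕ) (As : Fin N → Set V), (∀ i, Bbar G L (As i)) → ∀ K : ℕ, 1 ≤ K →
    ∃ m0 : ℕ, 1 ≤ m0 ∧ ∀ n : ℕ, m0 < n → ∀ ι : ℕ → Fin N,
      ¬ ChainExists G (fun j => As (ι j)) K (n - 1)

/-- A word is agreeable (for level `l`) if it is of the form `β^k β'` with
`β, β' ∈ L(E^{≤l})` and `β'` a nonempty initial segment of `β`. -/
def AgreeableW (G : DirGraph V E) (L : E → 𝒜) (l : ℕ) (α : List 𝒜) : Prop :=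
  ∃ (k : ℕ) (β β' : List 𝒜), IsLabelWord G L β ∧ IsLabelWord G L β' ∧
    β.length ≤ l ∧ β' ≠ [] ∧ β' <+: β ∧ α = wordPow β k ++ β'

/-- A representation of the labeled space `(E, L, 𝔅̄)` in a (C*-)algebra `B`:
projections `p A`, `A ∈ 𝔅̄`, and partial isometries `s a`, `a ∈ 𝒜`, satisfying
the defining relations of a labeled graph C*-algebra. -/
structure LRep (G : DirGraph V E) (L : E → 𝒜) (B : Type*)
    [NonUnitalRing B] [StarRing B] where
  p : Set V → B
  s : 𝒜 → B
  p_empty : p ∅ = 0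
  p_sa : ∀ A : Set V, Bbar G L A → star (p A) = p A
  p_mul : ∀ A A' : Set V, Bbar G L A → Bbar G L A' → p A * p A' = p (A ∩ A')
  p_union : ∀ A A' : Set V, Bbar G L A → Bbar G L A' →
    p (A ∪ A') = p A + p A' - p (A ∩ A')
  s_pi : ∀ a : 𝒜, s a * star (s a) * s a = s a
  p_s : ∀ (A : Set V) (a : 𝒜), Bbar G L A → p A * s a = s a * p (relRng G L A [a])
  s_s : ∀ a : 𝒜, star (s a) * s a = p (rngW G L [a])
  s_orth : ∀ a b : 𝒜, a ≠ b → star (s a) * s b = 0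
  ck : ∀ A : Set V, Bbar G L A →
    p A = (∑ᶠ a ∈ {a : 𝒜 | ∃ e, G.src e ∈ A ∧ L e = a},
      s a * p (relRng G L A [a]) * star (s a)) + p (A ∩ G.sinks)

/-- `s_α` for a word `α`: the product of the partial isometries of its letters
(junk value `0` on the empty word, which is never used). -/
def sWord {B : Type*} [NonUnitalRing B] (s : 𝒜 → B) : List 𝒜 → B
  | [] => 0
  | [a] => s a
  | a :: b :: w => s a * sWord s (b :: w)

/-- The range of a word in `L^#(E)` (`none` is the empty word, with range all
of `E^0`). -/
def owordRng (G : DirGraph V E) (L : E → 𝒜) : Option (List 𝒜) → Set V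
  | none => Set.univ
  | some w => rngW G L w

/-- The relative range of a word in `L^#(E)` with respect to `A` (`none` is
the empty word, with `r(A, ε) = A`). -/
def relRngE (G : DirGraph V E) (L : E → 𝒜) (A : Set V) : Option (List 𝒜) → Set V
  | none => A
  | some w => relRng G L A w

/-- The element `s_α p_A s_β*` of a representation, where `α`, `β` are words in
`L^#(E)` (`none` being the empty word `ε` with `s_ε` the identity). -/
def LRep.elt {B : Type*} [NonUnitalRing B] [StarRing B] {G : DirGraph V E} {L : E → 𝒜}
    (rep : LRep G L B) : Option (List 𝒜) → Set V → Option (List 𝒜) → B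
  | none, A, none => rep.p A
  | some α, A, none => sWord rep.s α * rep.p A
  | none, A, some β => rep.p A * star (sWord rep.s β)
  | some α, A, some β => sWord rep.s α * rep.p A * star (sWord rep.s β)

/-- A projection `q` is infinite if there is a partial isometry `u` with
`u* u = q`, `u u* ≤ q` and `u u* ≠ q`. -/
def IsInfiniteProjection (B : Type*) [NonUnitalRing B] [StarRing B] [PartialOrder B]
    (q : B) : Prop :=
  star q = q ∧ q * q = q ∧ ∃ u : B, star u * u = q ∧ u * star u ≤ q ∧ u * star u ≠ q

/-- A C*-algebra is AF if every finite subset can be approximated within any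
`ε > 0` from a finite-dimensional *-subalgebra. -/
def IsAFAlgebra (B : Type*) [NonUnitalNormedRing B] [StarRing B] [NormedSpace ℂ B] : Prop :=
  ∀ (F : Finset B) (ε : ℝ), 0 < ε →
    ∃ D : NonUnitalStarSubalgebra ℂ B, FiniteDimensional ℂ D ∧
      ∀ x ∈ F, ∃ y ∈ (D : Set B), ‖x - y‖ < ε

/-- A gauge action for a representation: a strongly continuous action of the
circle group by *-automorphisms fixing the projections and scaling the
generating partial isometries. -/
structure GaugeAction {B : Type*} [NonUnitalCStarAlgebra B]
    (G : DirGraph V E) (L : E → 𝒜) (rep : LRep G L B) where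
  γ : Circle → B ≃⋆ₐ[ℂ] B
  γ_mul : ∀ z w : Circle, γ (z * w) = (γ w).trans (γ z)
  γ_continuous : ∀ x : B, Continuous fun z => γ z x
  γ_s : ∀ (z : Circle) (a : 𝒜), γ z (rep.s a) = (z : ℂ) • rep.s a
  γ_p : ∀ (z : Circle) (A : Set V), Bbar G L A → γ z (rep.p A) = rep.p A

/-- The representation generates `B` as a C*-algebra. -/
def GeneratesAlg {B : Type*} [NonUnitalCStarAlgebra B]
    (G : DirGraph V E) (L : E → 𝒜) (rep : LRep G L B) : Prop :=
  closure (NonUnitalStarAlgebra.adjoin ℂ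
    ({x : B | ∃ a : 𝒜, x = rep.s a} ∪ {x : B | ∃ A : Set V, Bbar G L A ∧ x = rep.p A}) : Set B)
    = Set.univ

/-- A closed two-sided ideal of a C*-algebra (as a set). -/
def IsClosedTwoSidedIdealSet (B : Type*) [NonUnitalNormedRing B] [NormedSpace ℂ B]
    (I : Set B) : Prop :=
  IsClosed I ∧ (0 : B) ∈ I ∧ (∀ x ∈ I, ∀ y ∈ I, x + y ∈ I) ∧
    (∀ (c : ℂ), ∀ x ∈ I, c • x ∈ I) ∧ ∀ x ∈ I, ∀ y : B, x * y ∈ I ∧ y * x ∈ I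

/-- The closed two-sided ideal generated by an element. -/
def closedIdealGen (B : Type*) [NonUnitalNormedRing B] [NormedSpace ℂ B] (q : B) : Set B :=
  ⋂₀ {I : Set B | IsClosedTwoSidedIdealSet B I ∧ q ∈ I}

/-! A loop `p` (`s(p) = r(p)`) is repeatable, gives `A = {s(p)} ⊆ r(A, p)`, and yields
arbitrarily long chains `{s(p)} E^{|p|} {s(p)} ⋯`; each of these in turn forces a loop. For (4),
in a chain of more than `|⋃ᵢ Aᵢ|` composable paths two sources coincide by pigeonhole, and the
paths between them compose to a loop. -/

namespace GPath

variable {G : DirGraph V E}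

def append (p q : GPath G) (h : p.range = q.source) : GPath G where
  edges := p.edges ++ q.edges
  ne := by simp [p.ne]
  chain := p.chain.append q.chain <| by
    simpa [List.getLast?_eq_some_getLast p.ne, List.head?_eq_some_head q.ne, range, source] using h

@[simp]
lemma source_append (p q : GPath G) (h : p.range = q.source) :
    (p.append q h).source = p.source := by
  simp [source, append, List.head_append_of_ne_nil p.ne]

@[simp]
lemma range_append (p q : GPath G) (h : p.range = q.source) :
    (p.append q h).range = q.range := by
  simp [range, append, List.getLast_append_right q.ne]

def pow (x : GPath G) (hx : x.source = x.range) (n : ℕ) (hn : n ≠ 0) : GPath G where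
  edges := (List.replicate n x.edges).flatten
  ne := by simp [hn, x.ne]
  chain := by
    refine (List.isChain_flatten (by simp [x.ne.symm])).2
      ⟨fun l hl => List.eq_of_mem_replicate hl ▸ x.chain, List.isChain_replicate_of_rel n ?_⟩
    simpa [List.getLast?_eq_some_getLast x.ne, List.head?_eq_some_head x.ne, range, source]
      using hx.symm

lemma source_eq_range_of_edges_eq_append_self {x q : GPath G}
    (h : q.edges = x.edges ++ x.edges) : x.source = x.range :=
  ((h ▸ q.chain).rel_getLast_head_of_append x.ne x.ne).symm

lemma source_eq_range_iff_forall_exists_pow (x : GPath G) :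
    x.source = x.range ↔
      ∀ n : ℕ, 1 ≤ n → ∃ q : GPath G, q.edges = (List.replicate n x.edges).flatten := by
  refine ⟨fun hx n hn => ⟨x.pow hx n (by omega), rfl⟩, fun h => ?_⟩
  obtain ⟨q, hq⟩ := h 2 (by norm_num)
  exact source_eq_range_of_edges_eq_append_self (by simpa [List.replicate_succ] using hq)

lemma source_eq_range_iff_exists_subset (x : GPath G) :
    x.source = x.range ↔
      ∃ A : Set V, A.Finite ∧ A.Nonempty ∧ A ⊆ {v | x.source ∈ A ∧ v = x.range} := by
  refine ⟨fun hx => ⟨{x.source}, Set.finite_singleton _, Set.singleton_nonempty _, ?_⟩, ?_⟩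
  · simp [hx]
  · rintro ⟨A, -, ⟨a, ha⟩, hA⟩
    exact (hA (hA ha).1).2

end GPath

section Chains

variable {G : DirGraph V E}

lemma chainExists_const_of_source_eq_range (p : GPath G) (hp : p.source = p.range) (n : ℕ) :
    ChainExists G (fun _ => {p.source}) p.length n :=
  ⟨fun _ => p, fun _ => ⟨le_rfl, rfl, hp.symm⟩, fun _ _ => hp.symm⟩

variable {m : ℕ} {xs : Fin m → GPath G}

lemma exists_path_of_composable
    (hcomp : ∀ (j : ℕ) (h : j + 1 < m),
      (xs ⟨j, Nat.lt_of_succ_lt h⟩).range = (xs ⟨j + 1, h⟩).source)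
    (i : Fin m) (d : ℕ) (hd : i + d + 1 < m) :
    ∃ p : GPath G, p.source = (xs i).source ∧ p.range = (xs ⟨i + d + 1, hd⟩).source := by
  induction d with
  | zero => exact ⟨xs i, rfl, hcomp i hd⟩
  | succ d ih =>
    obtain ⟨p, hps, hpr⟩ := ih (by omega)
    exact ⟨p.append _ hpr, (p.source_append _ _).trans hps,
      (p.range_append _ _).trans (hcomp _ hd)⟩

lemma exists_source_eq_range_of_composable
    (hcomp : ∀ (j : ℕ) (h : j + 1 < m),
      (xs ⟨j, Nat.lt_of_succ_lt h⟩).range = (xs ⟨j + 1, h⟩).source)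
    {i j : Fin m} (hij : i < j) (heq : (xs i).source = (xs j).source) :
    ∃ p : GPath G, p.source = p.range := by
  obtain ⟨p, hps, hpr⟩ := exists_path_of_composable hcomp i (j - i - 1) (by omega)
  refine ⟨p, ?_⟩
  calc p.source = (xs j).source := hps.trans heq
    _ = p.range := by rw [hpr]; congr; ext; simp only; omega

lemma exists_source_eq_range_of_chainExists {As : ℕ → Set V} {S : Set V} (hS : S.Finite)
    (hAS : ∀ j, As j ⊆ S) {K n : ℕ} (hn : S.ncard < n) (hchain : ChainExists G As K n) :
    ∃ p : GPath G, p.source = p.range := by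
  obtain ⟨xs, hxs, hcomp⟩ := hchain
  have hcard : hS.toFinset.card < (Finset.univ : Finset (Fin n)).card := by
    simpa [← Set.ncard_eq_toFinset_card S hS] using hn
  obtain ⟨i, -, j, -, hij, heq⟩ := Finset.exists_ne_map_eq_of_card_lt_of_maps_to hcard
    (f := fun j => (xs j).source) (fun j _ => hS.mem_toFinset.2 (hAS j (hxs j).2.1))
  rcases hij.lt_or_gt with h | h
  · exact exists_source_eq_range_of_composable hcomp h heq
  · exact exists_source_eq_range_of_composable hcomp h heq.symm

end Chains

theorem graph_no_loops_tfae_general {V E : Type*}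
    (G : DirGraph V E) :
    List.TFAE
      [(¬ ∃ p : GPath G, p.source = p.range),
       (∀ A : Set V, A.Finite → A.Nonempty → ∀ x : GPath G,
          ¬ A ⊆ {v | x.source ∈ A ∧ v = x.range}),
       (¬ ∃ x : GPath G, ∀ n : ℕ, 1 ≤ n →
          ∃ q : GPath G, q.edges = (List.replicate n x.edges).flatten),
       (∀ (N : ℕ) (As : Fin N → Set V), (∀ i, (As i).Finite) → ∀ K : ℕ, 1 ≤ K →
          ∃ m0 : ℕ, 1 ≤ m0 ∧ ∀ n : ℕ, m0 < n → ∀ ι : ℕ → Fin N,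
            ¬ ChainExists G (fun j => As (ι j)) K n)] := by
  tfae_have 1 ↔ 2 := by
    simp only [GPath.source_eq_range_iff_exists_subset, not_exists, not_and]
    exact ⟨fun h A hA hne x => h x A hA hne, fun h x A hA hne => h A hA hne x⟩
  tfae_have 1 ↔ 3 :=
    not_congr (exists_congr GPath.source_eq_range_iff_forall_exists_pow)
  tfae_have 1 → 4 := by
    intro hno N As hAs K _
    refine ⟨(⋃ i, As i).ncard + 1, by omega, fun n hn ι hchain => hno ?_⟩
    exact exists_source_eq_range_of_chainExists (Set.finite_iUnion hAs)
      (fun j => Set.subset_iUnion _ (ι j)) (by omega) hchain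
  tfae_have 4 → 1 := by
    rintro h4 ⟨p, hp⟩
    obtain ⟨m0, -, h⟩ := h4 1 (fun _ => {p.source}) (fun _ => Set.finite_singleton _) p.length
      (List.length_pos_iff.2 p.ne)
    exact h (m0 + 1) (by omega) (fun _ => 0) (chainExists_const_of_source_eq_range p hp _)
  tfae_finish

/-- Proposition 3.1. For a countable directed graph `E` the
following are equivalent: (1) `E` has no loops; (2) `¬ A ⊆ r(A, x)` for every
nonempty finite vertex set `A` and every path `x` (where `r(A,x) = {r(x)}` if
`s(x) ∈ A` and `∅` otherwise); (3) `E` has no repeatable paths; (4) for every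
finite family of finite vertex sets and every `K ≥ 1` there is `m₀ ≥ 1` with
`A_{i_1}E^{≤K}A_{i_2}⋯E^{≤K}A_{i_{n+1}} = ∅` for all `n > m₀` and all choices
of indices. -/
theorem graph_no_loops_tfae {V E : Type*} [Countable V] [Countable E]
    (G : DirGraph V E) :
    List.TFAE
      [(¬ ∃ p : GPath G, p.source = p.range),
       (∀ A : Set V, A.Finite → A.Nonempty → ∀ x : GPath G,
          ¬ A ⊆ {v | x.source ∈ A ∧ v = x.range}),
       (¬ ∃ x : GPath G, ∀ n : ℕ, 1 ≤ n →
          ∃ q : GPath G, q.edges = (List.replicate n x.edges).flatten),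
       (∀ (N : ℕ) (As : Fin N → Set V), (∀ i, (As i).Finite) → ∀ K : ℕ, 1 ≤ K →
          ∃ m0 : ℕ, 1 ≤ m0 ∧ ∀ n : ℕ, m0 < n → ∀ ι : ℕ → Fin N,
            ¬ ChainExists G (fun j => As (ι j)) K n)] :=
  graph_no_loops_tfae_general G

end
end

section
/- Assume the labeled space (E,L,𝔅̄) is weakly left-resolving. For v ∈ Ω_0(E) and l ≥ 1, set X_l(v)=∩_{β∈L(E^{≤l}v)} r(β) and Y_l(v)=∪_{w∈X_l(v)} (L(E^{≤l}w)∖L(E^{≤l}v)), and assume (as proved in [BP2]) that [v]_l = X_l(v) ∖ r(Y_l(v)) and [v]_l ∩ r(Y_l(v)) = ∅, where r(Y_l(v)) = ∪_{β∈Y_l(v)} r(β). Then for every labeled path α ∈ L*(E), r([v]_l, α) = r(X_l(v), α) ∖ r(r(Y_l(v)), α). -/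
/-! # Common framework for labeled graph C*-algebras

Directed graphs, finite paths, labeled spaces `(E, L, 𝔅̄)` where `𝔅̄` is the
smallest accommodating set closed under relative complements (and containing
the sink parts of its members), loops and generalized loops, representations
of labeled spaces in C*-algebras, gauge actions, infinite projections,
AF algebras, and closed two-sided ideals. -/

noncomputable section

variable {V E 𝒜 : Type*}

/-! If `A, B ∈ 𝔅̄`, then `A ∖ B ∈ 𝔅̄` and weak left-resolvingness gives
`r(A ∖ B, α) ∩ r(B, α) = r((A ∖ B) ∩ B, α) = ∅`; the reverse inclusion
`r(A, α) ∖ r(B, α) ⊆ r(A ∖ B, α)` holds in any labeled graph. Hence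
`r(A ∖ B, α) = r(A, α) ∖ r(B, α)`, and the theorem is the case `A = X_l(v)`,
`B = r(Y_l(v))`. Both sets lie in `𝔅̄`: receiver set-finiteness makes
`L(E^{≤l} v)` and `Y_l(v)` finite, and `L(E^{≤l} v)` is nonempty as `v` is not a source. -/

section LabeledSpace

variable {G : DirGraph V E} {L : E → 𝒜}

def GPath.single (e : E) : GPath G := ⟨[e], List.cons_ne_nil e [], List.isChain_singleton e⟩

def WeaklyLeftResolving (G : DirGraph V E) (L : E → 𝒜) : Prop :=
  ∀ A B : Set V, Bbar G L A → Bbar G L B → ∀ w : List 𝒜, IsLabelWord G L w →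
    relRng G L A w ∩ relRng G L B w = relRng G L (A ∩ B) w

theorem GPath.one_le_length (p : GPath G) : 1 ≤ p.length :=
  List.length_pos_iff.mpr p.ne

@[simp] theorem GPath.length_single (e : E) : (GPath.single e : GPath G).length = 1 := rfl

theorem isLabelWord_singleton (e : E) : IsLabelWord G L [L e] := ⟨.single e, rfl⟩

theorem isLabelWord_of_mem_labelsToLe {l : ℕ} {u : V} {β : List 𝒜}
    (hβ : β ∈ labelsToLe G L l u) : IsLabelWord G L β :=
  let ⟨p, _, _, hp⟩ := hβ; ⟨p, hp⟩

theorem relRng_empty (w : List 𝒜) : relRng G L ∅ w = ∅ := by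
  ext x; simp [relRng]

theorem relRng_mono {A B : Set V} (h : A ⊆ B) (w : List 𝒜) : relRng G L A w ⊆ relRng G L B w :=
  fun _ ⟨p, hp, hA, hx⟩ => ⟨p, hp, h hA, hx⟩

namespace Bbar

theorem empty [Nonempty E] : Bbar G L (∅ : Set V) := by
  obtain ⟨e⟩ := ‹Nonempty E›
  simpa using Bbar.diff _ _ (Bbar.base _ (isLabelWord_singleton (G := G) (L := L) e))
    (Bbar.base _ (isLabelWord_singleton e))

theorem biInter {ι : Type*} {S : Set ι} {f : ι → Set V} (hS : S.Finite) (hne : S.Nonempty)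
    (h : ∀ i ∈ S, Bbar G L (f i)) : Bbar G L (⋂ i ∈ S, f i) := by
  induction S, hS using Set.Finite.induction_on with
  | empty => exact absurd hne Set.not_nonempty_empty
  | @insert a s _ _ ih =>
    rw [Set.biInter_insert]
    rcases s.eq_empty_or_nonempty with rfl | hs
    · simpa using h a (Set.mem_insert a ∅)
    · exact Bbar.inter _ _ (h a (Set.mem_insert a s))
        (ih hs fun i hi => h i (Set.mem_insert_of_mem a hi))

theorem biUnion [Nonempty E] {ι : Type*} {S : Set ι} {f : ι → Set V} (hS : S.Finite)
    (h : ∀ i ∈ S, Bbar G L (f i)) : Bbar G L (⋃ i ∈ S, f i) := by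
  induction S, hS using Set.Finite.induction_on with
  | empty => simpa using Bbar.empty
  | @insert a s _ _ ih =>
    rw [Set.biUnion_insert]
    exact Bbar.union _ _ (h a (Set.mem_insert a s))
      (ih fun i hi => h i (Set.mem_insert_of_mem a hi))

end Bbar

theorem relRng_diff (hwlr : WeaklyLeftResolving G L) {A B : Set V} (hA : Bbar G L A)
    (hB : Bbar G L B) {w : List 𝒜} (hw : IsLabelWord G L w) :
    relRng G L (A \ B) w = relRng G L A w \ relRng G L B w := by
  have hdisj : relRng G L (A \ B) w ∩ relRng G L B w = ∅ := by
    rw [hwlr _ _ (hA.diff _ _ hB) hB w hw, Set.sdiff_inter_self, relRng_empty]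
  refine Set.Subset.antisymm (fun x hx => ⟨relRng_mono Set.sdiff_subset w hx, fun hxB => ?_⟩) ?_
  · exact (Set.eq_empty_iff_forall_notMem.mp hdisj) x ⟨hx, hxB⟩
  · rintro x ⟨⟨p, hp, hpA, rfl⟩, hx⟩
    exact ⟨p, hp, ⟨hpA, fun hpB => hx ⟨p, hp, hpB, rfl⟩⟩, rfl⟩

theorem finite_biUnion_labelsToLe {A : Set V}
    (hA : ∀ n, 1 ≤ n → (labelsToLen G L n A).Finite) (l : ℕ) :
    (⋃ u ∈ A, labelsToLe G L l u).Finite := by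
  refine ((Set.finite_Icc 1 l).biUnion fun n hn => hA n hn.1).subset ?_
  simp only [Set.iUnion_subset_iff]
  rintro u hu β ⟨p, rfl, hpl, hβ⟩
  exact Set.mem_biUnion (Set.mem_Icc.mpr ⟨p.one_le_length, hpl⟩) ⟨p, hu, rfl, hβ⟩

end LabeledSpace

theorem relRng_gvtx_eq_general {V E 𝒜 : Type*}
    (G : DirGraph V E) (L : E → 𝒜)
    (sa : StandingAssumptions G L)
    (v : V) (hv : ∃ e, G.rng e = v) (l : ℕ) (hl : 1 ≤ l)
    (X : Set V) (hX : X = ⋂ β ∈ labelsToLe G L l v, rngW G L β)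
    (rY : Set V)
    (hrY : rY = ⋃ β ∈ (⋃ u ∈ X, labelsToLe G L l u \ labelsToLe G L l v), rngW G L β)
    (hgv : gvtx G L l v = X \ rY) :
    ∀ α : List 𝒜, IsLabelWord G L α →
      relRng G L (gvtx G L l v) α = relRng G L X α \ relRng G L rY α := by
  obtain ⟨e, rfl⟩ := hv
  have : Nonempty E := ⟨e⟩
  have hlabels_fin : ∀ {A : Set V}, Bbar G L A → (⋃ u ∈ A, labelsToLe G L l u).Finite :=
    fun hA => finite_biUnion_labelsToLe (sa.receiverSetFinite _ hA) l
  -- `v ∈ r(L e)` and `r(L e) ∈ 𝔅̄`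
  have hv_fin : (labelsToLe G L l (G.rng e)).Finite :=
    (hlabels_fin (Bbar.base _ (isLabelWord_singleton e))).subset <|
      Set.subset_biUnion_of_mem (u := fun u => labelsToLe G L l u) ⟨.single e, rfl, rfl⟩
  have hXB : Bbar G L X := hX ▸ Bbar.biInter hv_fin
    ⟨[L e], .single e, rfl, by simpa using hl, rfl⟩
    fun β hβ => Bbar.base β (isLabelWord_of_mem_labelsToLe hβ)
  have hrYB : Bbar G L rY := hrY ▸ Bbar.biUnion ((hlabels_fin hXB).subset
      (Set.biUnion_mono subset_rfl fun _ _ => Set.sdiff_subset))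
    fun β hβ => by
      obtain ⟨u, -, hβu, -⟩ := Set.mem_iUnion₂.mp hβ
      exact Bbar.base β (isLabelWord_of_mem_labelsToLe hβu)
  intro α hα
  rw [hgv]
  exact relRng_diff sa.wlr hXB hrYB hα

/-- key step of Proposition 2.3. If `(E, L, 𝔅̄)` is weakly
left-resolving and `[v]_l = X_l(v) ∖ r(Y_l(v))` with `[v]_l ∩ r(Y_l(v)) = ∅`,
then `r([v]_l, α) = r(X_l(v), α) ∖ r(r(Y_l(v)), α)` for every `α ∈ L*(E)`. -/
theorem relRng_gvtx_eq {V E 𝒜 : Type*} [Countable V] [Countable E] [Countable 𝒜]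
    (G : DirGraph V E) (L : E → 𝒜) (hL : Function.Surjective L)
    (sa : StandingAssumptions G L)
    (v : V) (hv : ∃ e, G.rng e = v) (l : ℕ) (hl : 1 ≤ l)
    (X : Set V) (hX : X = ⋂ β ∈ labelsToLe G L l v, rngW G L β)
    (rY : Set V)
    (hrY : rY = ⋃ β ∈ (⋃ u ∈ X, labelsToLe G L l u \ labelsToLe G L l v), rngW G L β)
    (hgv : gvtx G L l v = X \ rY)
    (hdisj : gvtx G L l v ∩ rY = ∅) :
    ∀ α : List 𝒜, IsLabelWord G L α →
      relRng G L (gvtx G L l v) α = relRng G L X α \ relRng G L rY α :=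
  relRng_gvtx_eq_general G L sa v hv l hl X hX rY hrY hgv

end
end

section
/- Let (E,L,𝔅̄) be a labeled space and let A ∈ 𝔅̄ be minimal, i.e. A is nonempty and no nonempty proper subset of A belongs to 𝔅̄. Then every generalized loop at A is a loop at A; that is, if α ∈ L(AE^{≥1}A) then A ⊆ r(A,α). -/
/-! # Common framework for labeled graph C*-algebras

Directed graphs, finite paths, labeled spaces `(E, L, 𝔅̄)` where `𝔅̄` is the
smallest accommodating set closed under relative complements (and containing
the sink parts of its members), loops and generalized loops, representations
of labeled spaces in C*-algebras, gauge actions, infinite projections,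
AF algebras, and closed two-sided ideals. -/

noncomputable section

variable {V E 𝒜 : Type*}

/-- If `A ∈ 𝔅̄` is minimal (nonempty with no nonempty proper
subset in `𝔅̄`), then every generalized loop at `A` is a loop at `A`, i.e.
`α ∈ L(A E^{≥1} A)` implies `A ⊆ r(A, α)`. -/
theorem genLoop_at_minimal_isLoop {V E 𝒜 : Type*}
    [Countable V] [Countable E] [Countable 𝒜]
    (G : DirGraph V E) (L : E → 𝒜) (hL : Function.Surjective L)
    (A : Set V) (hA : Bbar G L A)
    (hne : A.Nonempty)
    (hmin : ∀ B' : Set V, Bbar G L B' → B' ⊆ A → B'.Nonempty → B' = A)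
    (α : List 𝒜) (hα : IsGenLoop G L A α) :
    A ⊆ relRng G L A α := by
  obtain ⟨p, hlab, hsrc, hrng⟩ := hα
  have hw : IsLabelWord G L α := ⟨p, hlab⟩
  have hB : Bbar G L (A ∩ relRng G L A α) :=
    Bbar.inter _ _ hA (Bbar.rel _ _ hA hw)
  have hnonempty : (A ∩ relRng G L A α).Nonempty :=
    ⟨p.range, hrng, ⟨p, hlab, hsrc, rfl⟩⟩
  have := hmin _ hB Set.inter_subset_left hnonempty
  intro v hv
  rw [← this] at hv
  exact hv.2

end
end
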